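/- Let σ > 0, r > 0, λ > 0, K > 0 and μ₁ < μ₀ with η = (μ₀ − μ₁)/σ. Let ν₁ = μ₁/σ − σ/2, γ = (√(ν₁² + 2r) − ν₁)/σ, ν₀ = μ₀/σ − σ/2, β = (√(ν₀² + 2(r+λ)) − ν₀)/σ, and assume λ ≠ σηγ with E = λ/(λ − σηγ). Fix x₁ > 0 and F ∈ ℝ, and define v₀(x) = E(x₁ − K)(x/x₁)^γ + F(x/x₁)^β and v₁(x) = (x₁ − K)(x/x₁)^γ for x > 0. Then for every x ∈ (0, x₁), μ₀ x v₀′(x) + (1/2)σ² x² v₀″(x) − (r+λ) v₀(x) = −λ v₁(x), and v₀(x) → 0 as x → 0⁺. -/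

import Mathlib

/-!
Every power `y ↦ (y / a) ^ p` is an eigenfunction of the Euler operator
`f ↦ μ x f' + (σ² / 2) x² f'' - ρ f` on `(0, ∞)`, with eigenvalue the characteristic polynomial
`σ² / 2 · p (p - 1) + μ p - ρ`. The exponent `β` is the positive root of this polynomial for
`(μ₀, r + λ)`, so the `β`-term of `v₀` is annihilated. The exponent `γ` is the positive root for
`(μ₁, r)`, so its characteristic value for `(μ₀, r + λ)` is `σηγ - λ`, and `E` is chosen so that
`E (σηγ - λ) = -λ`. Both exponents are positive, which gives the limit at `0⁺`.
-/

open Real Filter Topology Set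

noncomputable def eulerCharPoly (μ σ ρ p : ℝ) : ℝ := σ ^ 2 / 2 * p * (p - 1) + μ * p - ρ

lemma eulerCharPoly_sqrt_sub_div_eq_zero {μ σ ρ ν : ℝ} (hσ : σ ≠ 0) (hρ : 0 ≤ ρ)
    (hν : ν = μ / σ - σ / 2) :
    eulerCharPoly μ σ ρ ((√(ν ^ 2 + 2 * ρ) - ν) / σ) = 0 := by
  have hsq : √(ν ^ 2 + 2 * ρ) ^ 2 = ν ^ 2 + 2 * ρ := sq_sqrt (by positivity)
  obtain rfl : μ = σ * ν + σ ^ 2 / 2 := by rw [hν]; field_simp; ring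
  unfold eulerCharPoly
  field_simp
  linear_combination hsq

lemma sqrt_sq_add_sub_div_pos {ν σ ρ : ℝ} (hσ : 0 < σ) (hρ : 0 < ρ) :
    0 < (√(ν ^ 2 + 2 * ρ) - ν) / σ := by
  refine div_pos (sub_pos.mpr ?_) hσ
  calc ν ≤ |ν| := le_abs_self ν
    _ = √(ν ^ 2) := (sqrt_sq_eq_abs ν).symm
    _ < √(ν ^ 2 + 2 * ρ) := sqrt_lt_sqrt (sq_nonneg ν) (by linarith)

lemma hasDerivAt_const_mul_div_rpow {a : ℝ} (ha : 0 < a) (c p : ℝ) {x : ℝ} (hx : 0 < x) :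
    HasDerivAt (fun y => c * (y / a) ^ p) (c * p / a * (x / a) ^ (p - 1)) x := by
  have hdiv : HasDerivAt (fun y => y / a) (1 / a) x := (hasDerivAt_id x).div_const a
  refine (((hasDerivAt_rpow_const (Or.inl (div_pos hx ha).ne')).comp x
    hdiv).const_mul c).congr_deriv ?_
  ring

lemma deriv_two_rpow {a : ℝ} (ha : 0 < a) (A B p q : ℝ) :
    EqOn (deriv fun y => A * (y / a) ^ p + B * (y / a) ^ q)
      (fun y => A * p / a * (y / a) ^ (p - 1) + B * q / a * (y / a) ^ (q - 1)) (Ioi 0) :=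
  fun _ hx => ((hasDerivAt_const_mul_div_rpow ha A p hx).add
    (hasDerivAt_const_mul_div_rpow ha B q hx)).deriv

lemma deriv_deriv_two_rpow {a : ℝ} (ha : 0 < a) (A B p q : ℝ) {x : ℝ} (hx : 0 < x) :
    deriv (deriv fun y => A * (y / a) ^ p + B * (y / a) ^ q) x =
      A * p / a * (p - 1) / a * (x / a) ^ (p - 1 - 1)
        + B * q / a * (q - 1) / a * (x / a) ^ (q - 1 - 1) := by
  have hEq := (deriv_two_rpow ha A B p q).eventuallyEq_of_mem (isOpen_Ioi.mem_nhds hx)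
  rw [hEq.deriv_eq]
  exact ((hasDerivAt_const_mul_div_rpow ha _ _ hx).add
    (hasDerivAt_const_mul_div_rpow ha _ _ hx)).deriv

lemma euler_two_rpow {a : ℝ} (ha : 0 < a) (μ σ ρ A B p q : ℝ) {x : ℝ} (hx : 0 < x) :
    μ * x * deriv (fun y => A * (y / a) ^ p + B * (y / a) ^ q) x
        + (1 / 2) * σ ^ 2 * x ^ 2
          * deriv (deriv fun y => A * (y / a) ^ p + B * (y / a) ^ q) x
        - ρ * (A * (x / a) ^ p + B * (x / a) ^ q) =
      A * eulerCharPoly μ σ ρ p * (x / a) ^ p + B * eulerCharPoly μ σ ρ q * (x / a) ^ q := by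
  have ht : 0 < x / a := div_pos hx ha
  have hx_eq : x = x / a * a := by field_simp
  rw [deriv_two_rpow ha A B p q hx, deriv_deriv_two_rpow ha A B p q hx]
  simp only [rpow_sub ht, rpow_one, eulerCharPoly]
  rw [hx_eq]
  field_simp
  ring

lemma tendsto_two_rpow_zero (a A B : ℝ) {p q : ℝ} (hp : 0 < p) (hq : 0 < q) :
    Tendsto (fun y => A * (y / a) ^ p + B * (y / a) ^ q) (𝓝 0) (𝓝 0) := by
  have hcont : Continuous fun y => A * (y / a) ^ p + B * (y / a) ^ q := by
    fun_prop (disch := positivity)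
  simpa [zero_rpow hp.ne', zero_rpow hq.ne'] using hcont.tendsto 0

theorem stmt5_general (σ r lam K μ₀ μ₁ : ℝ) (hσ : 0 < σ) (hr : 0 < r) (hlam : 0 < lam)
    (η : ℝ) (hη : η = (μ₀ - μ₁) / σ)
    (ν₁ γ ν₀ β : ℝ)
    (hν₁ : ν₁ = μ₁ / σ - σ / 2)
    (hγ : γ = (Real.sqrt (ν₁ ^ 2 + 2 * r) - ν₁) / σ)
    (hν₀ : ν₀ = μ₀ / σ - σ / 2)
    (hβ : β = (Real.sqrt (ν₀ ^ 2 + 2 * (r + lam)) - ν₀) / σ)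
    (hne : lam ≠ σ * η * γ) (E : ℝ) (hE : E = lam / (lam - σ * η * γ))
    (x₁ : ℝ) (hx₁ : 0 < x₁) (F : ℝ)
    (v₀ v₁ : ℝ → ℝ)
    (hv₀ : v₀ = fun x => E * (x₁ - K) * (x / x₁) ^ γ + F * (x / x₁) ^ β)
    (hv₁ : v₁ = fun x => (x₁ - K) * (x / x₁) ^ γ) :
    (∀ x ∈ Set.Ioo (0 : ℝ) x₁,
      μ₀ * x * deriv v₀ x + (1 / 2) * σ ^ 2 * x ^ 2 * deriv (deriv v₀) x
        - (r + lam) * v₀ x = -lam * v₁ x) ∧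
    Filter.Tendsto v₀ (nhdsWithin 0 (Set.Ioi 0)) (nhds 0) := by
  have hγ_root : eulerCharPoly μ₁ σ r γ = 0 := hγ ▸ eulerCharPoly_sqrt_sub_div_eq_zero hσ.ne' hr.le hν₁
  have hβ_root : eulerCharPoly μ₀ σ (r + lam) β = 0 :=
    hβ ▸ eulerCharPoly_sqrt_sub_div_eq_zero hσ.ne' (by positivity) hν₀
  have hγ_char : eulerCharPoly μ₀ σ (r + lam) γ = σ * η * γ - lam := by
    have hση : σ * η = μ₀ - μ₁ := by rw [hη]; field_simp
    unfold eulerCharPoly at hγ_root ⊢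
    linear_combination hγ_root - γ * hση
  have hE_char : E * (σ * η * γ - lam) = -lam := by
    rw [hE]; field_simp [sub_ne_zero.mpr hne]; ring
  subst hv₀ hv₁
  refine ⟨fun x hx => ?_, ?_⟩
  · rw [euler_two_rpow hx₁ _ _ _ _ _ _ _ hx.1, hγ_char, hβ_root]
    linear_combination (x₁ - K) * (x / x₁) ^ γ * hE_char
  · have hγ_pos : 0 < γ := hγ ▸ sqrt_sq_add_sub_div_pos hσ hr
    have hβ_pos : 0 < β := hβ ▸ sqrt_sq_add_sub_div_pos hσ (by positivity)
    exact (tendsto_two_rpow_zero x₁ _ _ hγ_pos hβ_pos).mono_left nhdsWithin_le_nhds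

/-- verification of the first branch of the state-0 value function
v₀(x) = E(x₁−K)(x/x₁)^γ + F(x/x₁)^β: it satisfies
μ₀ x v₀′ + (1/2)σ² x² v₀″ − (r+λ)v₀ = −λ v₁ on (0,x₁) and v₀(x) → 0 as x → 0⁺. -/
theorem stmt5 (σ r lam K μ₀ μ₁ : ℝ) (hσ : 0 < σ) (hr : 0 < r) (hlam : 0 < lam)
    (hK : 0 < K) (hμ : μ₁ < μ₀) (η : ℝ) (hη : η = (μ₀ - μ₁) / σ)
    (ν₁ γ ν₀ β : ℝ)
    (hν₁ : ν₁ = μ₁ / σ - σ / 2)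
    (hγ : γ = (Real.sqrt (ν₁ ^ 2 + 2 * r) - ν₁) / σ)
    (hν₀ : ν₀ = μ₀ / σ - σ / 2)
    (hβ : β = (Real.sqrt (ν₀ ^ 2 + 2 * (r + lam)) - ν₀) / σ)
    (hne : lam ≠ σ * η * γ) (E : ℝ) (hE : E = lam / (lam - σ * η * γ))
    (x₁ : ℝ) (hx₁ : 0 < x₁) (F : ℝ)
    (v₀ v₁ : ℝ → ℝ)
    (hv₀ : v₀ = fun x => E * (x₁ - K) * (x / x₁) ^ γ + F * (x / x₁) ^ β)
    (hv₁ : v₁ = fun x => (x₁ - K) * (x / x₁) ^ γ) :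
    (∀ x ∈ Set.Ioo (0 : ℝ) x₁,
      μ₀ * x * deriv v₀ x + (1 / 2) * σ ^ 2 * x ^ 2 * deriv (deriv v₀) x
        - (r + lam) * v₀ x = -lam * v₁ x) ∧
    Filter.Tendsto v₀ (nhdsWithin 0 (Set.Ioi 0)) (nhds 0) :=
  stmt5_general σ r lam K μ₀ μ₁ hσ hr hlam η hη ν₁ γ ν₀ β hν₁ hγ hν₀ hβ hne E hE x₁ hx₁ F v₀ v₁ hv₀
    hv₁
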